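/- arXiv:0801.3697 — 2 statements merged into one kernel-verified Lean document; each statement's English description precedes it below -/
import Mathlib

section
/- In every valid Septoku board, each of the seven symbols appears in at least five of the 37 cells. -/
/-!
Since a circle has seven cells and carries all seven symbols, every symbol occurs exactly once
in each circle, and equal symbols never lie in a common row or circle. Every cell lies in one
or two circles, so counting (cell, circle) incidences for the cells `S` of a given symbol gives
`#S + #(cells of S lying in two circles) = 7`. A finite check shows that among any three cells
lying in two circles, some two share a row or a circle; hence at most two cells of `S` lie in
two circles and `#S ≥ 5`.
-/

/-- Cell `n` (numbered 1 through 37) of the Septoku board, as an element of `Fin 37`. -/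
def cell (n : ℕ) : Fin 37 := ⟨(n - 1) % 37, Nat.mod_lt _ (by norm_num)⟩

/-- The set of cells with the given (1-based) numbers. -/
def cells (l : List ℕ) : Finset (Fin 37) := (l.map cell).toFinset

/-- The 21 rows of the Septoku board (7 horizontal and 7 in each diagonal direction). -/
def septokuRows : List (Finset (Fin 37)) :=
  [cells [1,2,3,4], cells [5,6,7,8,9], cells [10,11,12,13,14,15],
   cells [16,17,18,19,20,21,22], cells [23,24,25,26,27,28],
   cells [29,30,31,32,33], cells [34,35,36,37],
   cells [1,5,10,16], cells [2,6,11,17,23], cells [3,7,12,18,24,29],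
   cells [4,8,13,19,25,30,34], cells [9,14,20,26,31,35],
   cells [15,21,27,32,36], cells [22,28,33,37],
   cells [4,9,15,22], cells [3,8,14,21,28], cells [2,7,13,20,27,33],
   cells [1,6,12,19,26,32,37], cells [5,11,18,25,31,36],
   cells [10,17,24,30,35], cells [16,23,29,34]]

/-- The 7 circular regions of the Septoku board (centered at cells 6,8,17,19,21,30,32). -/
def septokuCircles : List (Finset (Fin 37)) :=
  [cells [1,2,5,6,7,11,12], cells [3,4,7,8,9,13,14],
   cells [10,11,16,17,18,23,24], cells [12,13,18,19,20,25,26],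
   cells [14,15,20,21,22,27,28], cells [24,25,29,30,31,34,35],
   cells [26,27,31,32,33,36,37]]

/-- A valid Septoku board: a function from the 37 cells to the 7 symbols that is
injective on each of the 21 rows and attains all seven symbols on each circle. -/
def IsSeptoku (f : Fin 37 → Fin 7) : Prop :=
  (∀ R ∈ septokuRows, Set.InjOn f ↑R) ∧
  (∀ C ∈ septokuCircles, ∀ v : Fin 7, ∃ x ∈ C, f x = v)

open Finset

theorem Finset.sum_card_inter_eq_sum_card_filter_mem {α : Type*} [DecidableEq α] (s : Finset α)
    (B : Finset (Finset α)) : ∑ t ∈ B, #(s ∩ t) = ∑ a ∈ s, #{b ∈ B | a ∈ b} := by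
  simp_rw [← filter_mem_eq_inter, card_eq_sum_ones, sum_filter]
  exact sum_comm

namespace Septoku

def circles : Finset (Finset (Fin 37)) := septokuCircles.toFinset

def circleCount (x : Fin 37) : ℕ := #{C ∈ circles | x ∈ C}

def ShareRegion (a b : Fin 37) : Prop := ∃ L ∈ septokuRows ++ septokuCircles, a ∈ L ∧ b ∈ L

instance : DecidableRel ShareRegion := fun a b => by unfold ShareRegion; infer_instance

theorem card_circles : #circles = 7 := by decide

theorem card_of_mem_septokuCircles : ∀ C ∈ septokuCircles, #C = 7 := by
  -- unfolded first: `decide` would otherwise pick the `Fintype (Finset (Fin 37))` instance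
  simp only [septokuCircles, List.forall_mem_cons, List.not_mem_nil, IsEmpty.forall_iff,
    implies_true, and_true]
  decide

theorem circleCount_eq_one_or_two : ∀ x, circleCount x = 1 ∨ circleCount x = 2 := by decide

theorem shareRegion_of_circleCount_eq_two : ∀ a b c, circleCount a = 2 → circleCount b = 2 →
    circleCount c = 2 → ShareRegion a b ∨ ShareRegion a c ∨ ShareRegion b c := by
  decide

theorem sum_circleCount (s : Finset (Fin 37)) :
    ∑ x ∈ s, circleCount x = #s + #{x ∈ s | circleCount x = 2} := by
  rw [card_eq_sum_ones, card_filter, ← sum_add_distrib]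
  refine sum_congr rfl fun x _ => ?_
  rcases circleCount_eq_one_or_two x with h | h <;> simp [h]

end Septoku

namespace IsSeptoku

open Septoku

variable {f : Fin 37 → Fin 7}

theorem injOn_of_mem_septokuCircles (hf : IsSeptoku f) {C : Finset (Fin 37)}
    (hC : C ∈ septokuCircles) : Set.InjOn f C :=
  injOn_of_surjOn_of_card_le (t := univ) f (fun _ _ => mem_coe.2 (mem_univ _))
    (fun v _ => hf.2 C hC v) (by rw [card_of_mem_septokuCircles C hC]; rfl)

theorem not_shareRegion (hf : IsSeptoku f) {a b : Fin 37} (hab : a ≠ b) (h : f a = f b) :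
    ¬ ShareRegion a b := by
  rintro ⟨L, hL, ha, hb⟩
  rcases List.mem_append.1 hL with hR | hC
  · exact hab (hf.1 L hR ha hb h)
  · exact hab (hf.injOn_of_mem_septokuCircles hC ha hb h)

theorem card_fiber_inter_circle (hf : IsSeptoku f) (v : Fin 7) {C : Finset (Fin 37)}
    (hC : C ∈ circles) : #(({x | f x = v} : Finset (Fin 37)) ∩ C) = 1 := by
  have hC' : C ∈ septokuCircles := List.mem_toFinset.1 hC
  obtain ⟨x, hxC, hx⟩ := hf.2 C hC' v
  refine card_eq_one.2 ⟨x, eq_singleton_iff_unique_mem.2 ⟨by simp [hxC, hx], ?_⟩⟩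
  intro y hy
  simp only [mem_inter, mem_filter, mem_univ, true_and] at hy
  exact hf.injOn_of_mem_septokuCircles hC' hy.2 hxC (hy.1.trans hx.symm)

theorem sum_circleCount_fiber (hf : IsSeptoku f) (v : Fin 7) :
    ∑ x ∈ {x | f x = v}, circleCount x = 7 := by
  simp only [circleCount]
  rw [← sum_card_inter_eq_sum_card_filter_mem, sum_congr rfl fun C hC =>
    hf.card_fiber_inter_circle v hC, sum_const, card_circles, smul_eq_mul, mul_one]

theorem card_fiber_filter_circleCount_eq_two_le_two (hf : IsSeptoku f) (v : Fin 7) :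
    #{x ∈ {x | f x = v} | circleCount x = 2} ≤ 2 := by
  by_contra! h
  obtain ⟨a, ha, b, hb, c, hc, hab, hac, hbc⟩ := two_lt_card.1 h
  simp only [mem_filter, mem_univ, true_and] at ha hb hc
  rcases shareRegion_of_circleCount_eq_two a b c ha.2 hb.2 hc.2 with h | h | h
  · exact hf.not_shareRegion hab (ha.1.trans hb.1.symm) h
  · exact hf.not_shareRegion hac (ha.1.trans hc.1.symm) h
  · exact hf.not_shareRegion hbc (hb.1.trans hc.1.symm) h

end IsSeptoku

/-- In every valid Septoku board, each of the seven symbols appears in at least five cells. -/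
theorem septoku_each_symbol_at_least_five (f : Fin 37 → Fin 7) (hf : IsSeptoku f) :
    ∀ v : Fin 7, 5 ≤ (Finset.univ.filter (fun x => f x = v)).card := by
  intro v
  have h_sum := Septoku.sum_circleCount {x | f x = v}
  rw [hf.sum_circleCount_fiber v] at h_sum
  have h_shared := hf.card_fiber_filter_circleCount_eq_two_le_two v
  omega
end

section
/- In a valid Septoku board f, if some symbol v occurs in exactly seven cells, then v = f(19), the value of the central cell; moreover v then occurs exactly once in each of the 28 regions (the 21 rows and the 7 circles). -/
/-! The cells carrying one symbol of a valid board form an independent set of the Septoku graph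
(cells sharing a region get different symbols; on a circle because its seven cells carry all seven
symbols). The seven horizontal rows partition the board, so a symbol occurring seven times occurs
exactly once in each of them, i.e. its cells form an independent transversal of the horizontal rows.
A pruned search finds exactly two such transversals; both contain the centre and meet every region
exactly once. -/

namespace List

variable {α : Type*}

def pairwiseSections (r : α → α → Prop) [DecidableRel r] : List (List α) → List (List α)
  | [] => [[]]
  | l :: L => (pairwiseSections r L).flatMap fun s =>
      (l.filter fun x => decide (∀ y ∈ s, r x y)).map (· :: s)

theorem mem_pairwiseSections {r : α → α → Prop} [DecidableRel r] {L : List (List α)}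
    {s : List α} : s ∈ pairwiseSections r L ↔ s ∈ L.sections ∧ s.Pairwise r := by
  induction L generalizing s with
  | nil => simp +contextual [pairwiseSections]
  | cons l L ih =>
    simp only [pairwiseSections, sections, mem_flatMap, mem_map, mem_filter, ih,
      decide_eq_true_eq]
    grind [pairwise_cons]

theorem exists_mem_sections_forall {p : α → Prop} {L : List (List α)}
    (h : ∀ l ∈ L, ∃ x ∈ l, p x) : ∃ s ∈ L.sections, ∀ x ∈ s, p x := by
  induction L with
  | nil => exact ⟨[], by simp⟩
  | cons l L ih =>
    obtain ⟨x, hxl, hx⟩ := h l mem_cons_self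
    obtain ⟨s, hs, hsp⟩ := ih fun l' hl' => h l' (mem_cons_of_mem l hl')
    exact ⟨x :: s, mem_flatMap.2 ⟨s, hs, mem_map_of_mem hxl⟩, by simpa [hx] using hsp⟩

end List

theorem Finset.nonempty_of_card_le_card_biUnion {ι α : Type*} [DecidableEq α] {s : Finset ι}
    {t : ι → Finset α} (ht : ∀ i ∈ s, (t i).card ≤ 1) (hs : s.card ≤ (s.biUnion t).card)
    {i : ι} (hi : i ∈ s) : (t i).Nonempty := by
  by_contra h
  have hlt : ∑ j ∈ s, (t j).card < ∑ _j ∈ s, 1 :=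
    Finset.sum_lt_sum ht ⟨i, hi, by simp [Finset.not_nonempty_iff_eq_empty.1 h]⟩
  have := Finset.card_biUnion_le (s := s) (t := t)
  simp only [Finset.sum_const, smul_eq_mul, mul_one] at hlt
  omega

def septokuRegions : List (Finset (Fin 37)) := septokuRows ++ septokuCircles

def septokuGraph : SimpleGraph (Fin 37) where
  Adj x y := x ≠ y ∧ ∃ R ∈ septokuRegions, x ∈ R ∧ y ∈ R
  symm := ⟨fun _ _ ⟨hne, R, hR, hx, hy⟩ => ⟨hne.symm, R, hR, hy, hx⟩⟩
  loopless := ⟨fun _ h => h.1 rfl⟩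

instance : DecidableRel septokuGraph.Adj := fun _ _ => by
  unfold septokuGraph; infer_instance

theorem IsSeptoku.injOn {f : Fin 37 → Fin 7} (hf : IsSeptoku f) :
    ∀ R ∈ septokuRegions, Set.InjOn f R := by
  intro R hR
  rcases List.mem_append.1 hR with hrow | hcircle
  · exact hf.1 R hrow
  · -- `decide` on `∀ C ∈ septokuCircles, _` would pick the `Fintype (Finset (Fin 37))` instance
    -- and enumerate all finsets; `List.Forall` keeps the check on the seven circles.
    have hcard : ∀ C ∈ septokuCircles, C.card = 7 :=
      List.forall_iff_forall_mem.1 (by decide +kernel)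
    refine Finset.injOn_of_surjOn_of_card_le (t := Finset.univ) f
      (fun _ _ => Finset.mem_coe.2 (Finset.mem_univ _)) (fun v _ => ?_) (by simp [hcard R hcircle])
    obtain ⟨x, hx, rfl⟩ := hf.2 R hcircle v
    exact ⟨x, hx, rfl⟩

def IsSeptoku.toColoring {f : Fin 37 → Fin 7} (hf : IsSeptoku f) :
    septokuGraph.Coloring (Fin 7) :=
  SimpleGraph.Coloring.mk f fun ⟨hne, R, hR, hx, hy⟩ hxy => hne (hf.injOn R hR hx hy hxy)

def horizontalRows : List (List (Fin 37)) :=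
  [[1,2,3,4], [5,6,7,8,9], [10,11,12,13,14,15], [16,17,18,19,20,21,22],
   [23,24,25,26,27,28], [29,30,31,32,33], [34,35,36,37]].map (List.map cell)

theorem IsSeptoku.exists_mem_horizontalRow {f : Fin 37 → Fin 7} (hf : IsSeptoku f) {v : Fin 7}
    (hv : (Finset.univ.filter (fun x => f x = v)).card = 7) :
    ∀ l ∈ horizontalRows, ∃ x ∈ l, f x = v := by
  have hrows : horizontalRows.map List.toFinset = septokuRows.take 7 := rfl
  have hregion : ∀ l ∈ horizontalRows, l.toFinset ∈ septokuRegions := fun l hl =>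
    List.mem_append_left _ (List.mem_of_mem_take (hrows ▸ List.mem_map_of_mem hl))
  have hcover : horizontalRows.toFinset.biUnion List.toFinset = Finset.univ := by decide
  have hcard : horizontalRows.toFinset.card = 7 := by decide
  intro l hl
  obtain ⟨x, hx⟩ := Finset.nonempty_of_card_le_card_biUnion
    (t := fun l => l.toFinset.filter (fun x => f x = v))
    (fun l hl => Finset.card_le_one.2 fun a ha b hb => by
      simp only [Finset.mem_filter] at ha hb
      exact hf.injOn _ (hregion l (List.mem_toFinset.1 hl)) ha.1 hb.1 (ha.2.trans hb.2.symm))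
    (by rw [hcard, ← Finset.filter_biUnion, hcover, hv]) (List.mem_toFinset.2 hl)
  simp only [Finset.mem_filter, List.mem_toFinset] at hx
  exact ⟨x, hx⟩

def indepTransversals : List (List (Fin 37)) :=
  [[3,5,15,19,23,33,35].map cell, [2,9,10,19,28,29,36].map cell]

theorem pairwiseSections_horizontalRows :
    horizontalRows.pairwiseSections (fun x y => ¬ septokuGraph.Adj x y) = indepTransversals := by
  decide +kernel

theorem IsSeptoku.exists_mem_indepTransversals {f : Fin 37 → Fin 7} (hf : IsSeptoku f)
    {v : Fin 7} (hv : (Finset.univ.filter (fun x => f x = v)).card = 7) :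
    ∃ T ∈ indepTransversals, ∀ x, f x = v ↔ x ∈ T := by
  obtain ⟨s, hs, hsv⟩ := List.exists_mem_sections_forall (hf.exists_mem_horizontalRow hv)
  have hindep : s.Pairwise fun x y => ¬ septokuGraph.Adj x y :=
    List.pairwise_of_forall_mem_list fun x hx y hy hxy =>
      hf.toColoring.valid hxy ((hsv x hx).trans (hsv y hy).symm)
  have hsT : s ∈ indepTransversals :=
    pairwiseSections_horizontalRows ▸ List.mem_pairwiseSections.2 ⟨hs, hindep⟩
  have hcard : ∀ T ∈ indepTransversals, T.toFinset.card = 7 := by decide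
  have hsub : s.toFinset ⊆ Finset.univ.filter (fun x => f x = v) := fun x hx =>
    Finset.mem_filter.2 ⟨Finset.mem_univ x, hsv x (List.mem_toFinset.1 hx)⟩
  have heq := Finset.eq_of_subset_of_card_le hsub (by rw [hv, hcard s hsT])
  refine ⟨s, hsT, fun x => ?_⟩
  simpa using (Finset.ext_iff.1 heq x).symm

theorem cell_19_mem_of_mem_indepTransversals : ∀ T ∈ indepTransversals, cell 19 ∈ T := by
  decide

theorem card_filter_mem_eq_one_of_mem_indepTransversals :
    ∀ T ∈ indepTransversals, ∀ R ∈ septokuRegions, (R.filter (· ∈ T)).card = 1 := by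
  simpa only [← List.forall_iff_forall_mem] using (by decide +kernel :
    indepTransversals.Forall fun T => septokuRegions.Forall fun R => (R.filter (· ∈ T)).card = 1)

/-- If some symbol `v` occurs in exactly seven cells of a valid Septoku board `f`, then
`v` is the value of the central cell 19, and `v` occurs exactly once in each of the 28
regions (the 21 rows and the 7 circles). -/
theorem septoku_seven_times_center (f : Fin 37 → Fin 7) (hf : IsSeptoku f)
    (v : Fin 7) (hv : (Finset.univ.filter (fun x => f x = v)).card = 7) :
    v = f (cell 19) ∧
    ∀ R ∈ septokuRows ++ septokuCircles, (R.filter (fun x => f x = v)).card = 1 := by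
  obtain ⟨T, hT, hfT⟩ := hf.exists_mem_indepTransversals hv
  refine ⟨((hfT _).2 (cell_19_mem_of_mem_indepTransversals T hT)).symm, fun R hR => ?_⟩
  simpa only [hfT] using card_filter_mem_eq_one_of_mem_indepTransversals T hT R hR
end
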